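/- Let 𝔉 be a subgroup-closed formation and π a set of primes. For every finite group G, the π(𝔑∘𝔉)-hypercentre of G is contained in N^∞_{π'𝔉}(G), the terminal term of the ascending π'𝔉-norm series of G. -/

import Mathlib

universe u

/-- A class of groups (in universe `u`). -/
def GroupClass : Type (u + 1) := ∀ (G : Type u) [Group G], Prop

/-- Closed under homomorphic images (quotients). -/
def GroupClass.QClosed (F : GroupClass.{u}) : Prop :=
  ∀ (G : Type u) [Group G] (H : Type u) [Group H] (f : G →* H),
    Function.Surjective f → F G → F H

/-- Closed under subdirect products: if `G/N₁ ∈ F` and `G/N₂ ∈ F` then `G/(N₁ ⊓ N₂) ∈ F`. -/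
def GroupClass.SubdirClosed (F : GroupClass.{u}) : Prop :=
  ∀ (G : Type u) [Group G] (N₁ N₂ : Subgroup G) (h₁ : N₁.Normal) (h₂ : N₂.Normal),
    (letI := h₁; F (G ⧸ N₁)) → (letI := h₂; F (G ⧸ N₂)) →
    (letI : (N₁ ⊓ N₂).Normal :=
      { conj_mem := fun x hx g => ⟨h₁.conj_mem x hx.1 g, h₂.conj_mem x hx.2 g⟩ };
      F (G ⧸ (N₁ ⊓ N₂)))

/-- Closed under taking subgroups. -/
def GroupClass.SClosed (F : GroupClass.{u}) : Prop :=
  ∀ (G : Type u) [Group G] (H : Subgroup G), F G → F ↥H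

/-- Closed under taking normal subgroups. -/
def GroupClass.NClosed (F : GroupClass.{u}) : Prop :=
  ∀ (G : Type u) [Group G] (N : Subgroup G), N.Normal → F G → F ↥N

/-- Closed under products of normal subgroups. -/
def GroupClass.NProdClosed (F : GroupClass.{u}) : Prop :=
  ∀ (G : Type u) [Group G] (N₁ N₂ : Subgroup G), N₁.Normal → N₂.Normal →
    F ↥N₁ → F ↥N₂ → F ↥(N₁ ⊔ N₂)

/-- Closed under extensions. -/
def GroupClass.ExtClosed (F : GroupClass.{u}) : Prop :=
  ∀ (G : Type u) [Group G] (N : Subgroup G) (hN : N.Normal),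
    F ↥N → (letI := hN; F (G ⧸ N)) → F G

/-- `R` is the `F`-residual of `G`: the smallest normal subgroup with quotient in `F`. -/
def IsResidual (F : GroupClass.{u}) (G : Type u) [Group G] (R : Subgroup G) : Prop :=
  ∃ hR : R.Normal, (letI := hR; F (G ⧸ R)) ∧
    ∀ (N : Subgroup G) (hN : N.Normal), (letI := hN; F (G ⧸ N)) → R ≤ N

/-- `R` is the `H`-radical of `G`: the largest normal subgroup belonging to `H`. -/
def IsHRadical (H : GroupClass.{u}) (G : Type u) [Group G] (R : Subgroup G) : Prop :=
  R.Normal ∧ H ↥R ∧ ∀ N : Subgroup G, N.Normal → H ↥N → N ≤ R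

/-- The `ℌ`-`𝔉`-norm of `G` (given a residual function `res` and a radical function `rad`):
the intersection over all subgroups `K ≤ G` of the normalizers of `K^𝔉 G_ℌ`. -/
noncomputable def HFnorm (res rad : ∀ (A : Type u) [Group A], Subgroup A)
    (G : Type u) [Group G] : Subgroup G :=
  ⨅ K : Subgroup G, Subgroup.normalizer ((Subgroup.map K.subtype (res ↥K) ⊔ rad G : Subgroup G) : Set G)

/-- `G` is a `π`-group: every prime dividing its order lies in `π`. -/
def IsPiGroup (π : Set ℕ) (G : Type u) [Group G] : Prop :=
  ∀ p : ℕ, p.Prime → p ∣ Nat.card G → p ∈ π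

/-- The subgroup `O_π(G)`, generated by all normal `π`-subgroups of `G`. -/
noncomputable def Opi (π : Set ℕ) (G : Type u) [Group G] : Subgroup G :=
  ⨆ (N : Subgroup G) (_ : N.Normal) (_ : IsPiGroup π ↥N), N

/-- `G` is `π`-solvable: it has a finite normal series whose factors are
`π'`-groups or solvable `π`-groups. -/
def IsPiSolvable (π : Set ℕ) (G : Type u) [Group G] : Prop :=
  ∃ (n : ℕ) (c : Fin (n + 1) → Subgroup G),
    c 0 = ⊥ ∧ c (Fin.last n) = ⊤ ∧
    ∀ i : Fin n, (c i.castSucc) ≤ (c i.succ) ∧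
      ((c i.castSucc).subgroupOf (c i.succ)).Normal ∧
      ∀ h : ((c i.castSucc).subgroupOf (c i.succ)).Normal,
        (letI := h;
          IsPiGroup {p | p ∉ π} (↥(c i.succ) ⧸ (c i.castSucc).subgroupOf (c i.succ)) ∨
          (IsPiGroup π (↥(c i.succ) ⧸ (c i.castSucc).subgroupOf (c i.succ)) ∧
            IsSolvable (↥(c i.succ) ⧸ (c i.castSucc).subgroupOf (c i.succ))))

/-- `G` is `π`-nilpotent: it has a normal `π'`-subgroup with nilpotent quotient
(equivalently `G/O_{π'}(G)` is nilpotent). -/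
def IsPiNilpotent (π : Set ℕ) (G : Type u) [Group G] : Prop :=
  ∃ (N : Subgroup G) (hN : N.Normal), IsPiGroup {p | p ∉ π} ↥N ∧
    (letI := hN; Group.IsNilpotent (G ⧸ N))

/-- `G` is `S`-critical for the class `F`. -/
def CritS (F : GroupClass.{u}) (G : Type u) [Group G] : Prop :=
  ¬ F G ∧ ∀ K : Subgroup G, K ≠ ⊤ → F ↥K

/-- The ascending norm series associated with a "norm" functor `n`:
`N⁰ = 1` and `Nⁱ(G)` is the preimage in `G` of `n(G/Nⁱ⁻¹(G))`. -/
inductive NormChain (n : ∀ (A : Type u) [Group A], Subgroup A)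
    (G : Type u) [Group G] : Subgroup G → Prop
  | base : NormChain n G ⊥
  | step (M : Subgroup G) (hM : M.Normal) : NormChain n G M →
      NormChain n G (letI := hM; Subgroup.comap (QuotientGroup.mk' M) (n (G ⧸ M)))

/-- `S` is the terminal term `N^∞(G)` of the ascending norm series of `G`. -/
def IsNormTerminal (n : ∀ (A : Type u) [Group A], Subgroup A)
    (G : Type u) [Group G] (S : Subgroup G) : Prop :=
  NormChain n G S ∧ ∃ hS : S.Normal, (letI := hS; n (G ⧸ S) = ⊥)

/-- `L/K` is a chief factor of `G`. -/
def IsChiefFactor (G : Type u) [Group G] (K L : Subgroup G) : Prop :=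
  K.Normal ∧ L.Normal ∧ K < L ∧
    ∀ M : Subgroup G, M.Normal → K ≤ M → M ≤ L → M = K ∨ M = L

/-- The chief factor `L/K` is `X`-central in `G`:
`(L/K) ⋊ (G/C_G(L/K)) ∈ X`, where `G/C_G(L/K)` acts on `L/K` by conjugation. -/
def IsXCentral (X : GroupClass.{u}) (G : Type u) [Group G] (K L : Subgroup G)
    (hK : K.Normal) (hL : L.Normal) (_ : K ≤ L) : Prop :=
  ∃ (C : Subgroup G) (hC : C.Normal),
    (∀ g : G, g ∈ C ↔ ∀ x ∈ L, g * x * g⁻¹ * x⁻¹ ∈ K) ∧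
    (letI := hC; letI := hK.subgroupOf L;
      ∃ φ : (G ⧸ C) →* MulAut (↥L ⧸ K.subgroupOf L),
        (∀ (g : G) (x : ↥L), φ (QuotientGroup.mk g) (QuotientGroup.mk x) =
          QuotientGroup.mk ⟨g * ↑x * g⁻¹, hL.conj_mem ↑x x.2 g⟩) ∧
        X (SemidirectProduct (↥L ⧸ K.subgroupOf L) (G ⧸ C) φ))

/-- A normal subgroup `N` of `G` is `πX`-hypercentral: every `G`-chief factor below `N`
of order divisible by some prime in `π` is `X`-central in `G`. -/
def PiHypercentral (π : Set ℕ) (X : GroupClass.{u}) (G : Type u) [Group G]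
    (N : Subgroup G) : Prop :=
  N.Normal ∧ ∀ K L : Subgroup G, ∀ hcf : IsChiefFactor G K L, L ≤ N →
    (∃ p ∈ π, p.Prime ∧ p ∣ Nat.card (↥L ⧸ K.subgroupOf L)) →
    IsXCentral X G K L hcf.1 hcf.2.1 hcf.2.2.1.le

/-- The `πX`-hypercentre of `G`: the product of all `πX`-hypercentral normal subgroups. -/
noncomputable def piHypercentre (π : Set ℕ) (X : GroupClass.{u})
    (G : Type u) [Group G] : Subgroup G :=
  sSup {N : Subgroup G | PiHypercentral π X G N}

/-- A group is quaternion-free if it has no section isomorphic to `Q₈`. -/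
def QuaternionFree (X : Type u) [Group X] : Prop :=
  ∀ (H : Subgroup X) (K : Subgroup ↥H) (hK : K.Normal),
    (letI := hK; ¬ Nonempty ((↥H ⧸ K) ≃* QuaternionGroup 2))

open Classical in
/-- `Ψ_p(X)`: generated by the elements of order `p` (for odd `p`); for `p = 2`, by the
elements of order `2` if the Sylow `2`-subgroups are quaternion-free, and by the elements
of order `2` or `4` otherwise. -/
noncomputable def Psi (p : ℕ) (X : Type u) [Group X] : Subgroup X :=
  if p = 2 ∧ ¬ (∀ P : Sylow 2 X, QuaternionFree ↥(P : Subgroup X)) then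
    Subgroup.closure {x : X | orderOf x = 2 ∨ orderOf x = 4}
  else Subgroup.closure {x : X | orderOf x = p}

/-- The `π'𝔉`-norm of `G`: the intersection over all subgroups `K ≤ G` of the
normalizers of `K^𝔉 O_{π'}(G)`. -/
noncomputable def piPrimeNorm (π : Set ℕ) (res : ∀ (A : Type u) [Group A], Subgroup A)
    (G : Type u) [Group G] : Subgroup G :=
  HFnorm res (fun B iB => letI := iB; Opi {p | p ∉ π} B) G

/-!
Let `N` be `π(𝔑∘𝔉)`-hypercentral and suppose its image in `G/S` is nontrivial; choose a minimal
normal subgroup `M` of `G/S` inside it. As the `π'𝔉`-norm of `G/S` is trivial, it suffices to show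
that `M` normalises `K^𝔉 O_{π'}(G/S)` for every `K ≤ G/S`. If `M` is a `π'`-group it lies in
`O_{π'}(G/S)`. Otherwise `M` lifts to a chief factor `A` of `G` below `N` whose order is divisible
by a prime of `π`, so `A ⋊ G/C_G(A)` has nilpotent `𝔉`-residual `R`. Since `G/C_G(A)` acts
faithfully and irreducibly on `A`, this forces `R ≤ A`, whence `G/C_G(A) ∈ 𝔉`. As `𝔉` is
subgroup-closed, `K^𝔉` then lies in the image of `C_G(A)`, which centralises `M`.
-/

theorem Subgroup.eq_bot_of_commutator_eq_self {W : Type*} [Group W] {A R : Subgroup W}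
    [R.Normal] [Group.IsNilpotent R] (h : ⁅A, R⁆ = A) : A = ⊥ := by
  have hA : ∀ n, A ≤ ((⊤ : Subgroup R).lowerCentralSeries n).map R.subtype := by
    intro n
    induction n with
    | zero => simpa [← MonoidHom.range_eq_map] using h ▸ Subgroup.commutator_le_right A R
    | succ n ih =>
      calc A = ⁅A, R⁆ := h.symm
        _ ≤ ⁅((⊤ : Subgroup R).lowerCentralSeries n).map R.subtype,
            (⊤ : Subgroup R).map R.subtype⁆ :=
          Subgroup.commutator_mono ih (by simp [← MonoidHom.range_eq_map])
        _ = _ := (Subgroup.map_commutator _ _ _).symm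
  obtain ⟨n, hn⟩ := nilpotent_iff_lowerCentralSeries.mp ‹_›
  simpa [hn] using hA n

namespace SemidirectProduct

variable {A B : Type*} [Group A] [Group B] {φ : B →* MulAut A}

theorem right_apply_eq_of_mem_centralizer {w : A ⋊[φ] B}
    (hw : w ∈ Subgroup.centralizer (inl (φ := φ)).range) (a : A) :
    φ w.right a = w.left⁻¹ * a * w.left := by
  have h := congrArg left (Subgroup.mem_centralizer_iff.mp hw (inl a) ⟨a, rfl⟩)
  simp only [mul_left, left_inl, right_inl, map_one, MulAut.one_apply] at h
  rw [mul_assoc, h, inv_mul_cancel_left]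

def leftInvHom (R : Subgroup (A ⋊[φ] B))
    (hR : R ≤ Subgroup.centralizer (inl (φ := φ)).range) : R →* A where
  toFun w := (w : A ⋊[φ] B).left⁻¹
  map_one' := by simp
  map_mul' w₁ w₂ := by
    simp only [Subgroup.coe_mul, mul_left, right_apply_eq_of_mem_centralizer (hR w₁.2)]
    group

theorem right_eq_one_of_mem_centralizer (hφ : Function.Injective φ) {w : A ⋊[φ] B}
    (hw : w ∈ Subgroup.centralizer (inl (φ := φ)).range)
    (hc : w.left ∈ Subgroup.center A) : w.right = 1 := by
  refine hφ (MulEquiv.ext fun a => ?_)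
  rw [right_apply_eq_of_mem_centralizer hw, mul_assoc, Subgroup.mem_center_iff.mp hc a]
  simp

theorem eq_bot_or_eq_range_inl_of_normal
    (hmin : ∀ U : Subgroup A, (∀ b, ∀ a ∈ U, φ b a ∈ U) → U = ⊥ ∨ U = ⊤)
    {V : Subgroup (A ⋊[φ] B)} (hV : V.Normal) (hVA : V ≤ inl.range) :
    V = ⊥ ∨ V = inl.range := by
  have hmap : (V.comap inl).map inl = V := by
    rw [Subgroup.map_comap_eq, inf_eq_right.mpr hVA]
  have hinv : ∀ b, ∀ a ∈ V.comap inl, φ b a ∈ V.comap inl := fun b a ha => by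
    simpa [inl_aut] using hV.conj_mem _ ha (inr b)
  rcases hmin _ hinv with h | h
  · left; rw [← hmap, h, Subgroup.map_bot]
  · right; rw [← hmap, h, MonoidHom.range_eq_map]

end SemidirectProduct

open SemidirectProduct in
theorem IsResidual.mem_of_semidirectProduct {F : GroupClass.{u}} (hQ : F.QClosed)
    {A B : Type u} [Group A] [Group B] [Nontrivial A] {φ : B →* MulAut A}
    (hφ : Function.Injective φ)
    (hmin : ∀ U : Subgroup A, (∀ b, ∀ a ∈ U, φ b a ∈ U) → U = ⊥ ∨ U = ⊤)
    {R : Subgroup (A ⋊[φ] B)} (hR : IsResidual F (A ⋊[φ] B) R) [Group.IsNilpotent R] :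
    F B := by
  obtain ⟨hRn, hRq, -⟩ := hR
  have hAn : (inl (φ := φ)).range.Normal :=
    range_inl_eq_ker_rightHom (φ := φ) ▸ rightHom.normal_ker
  have hAne : (inl (φ := φ)).range ≠ ⊥ := by
    obtain ⟨a, ha⟩ := exists_ne (1 : A)
    exact Subgroup.ne_bot_iff_exists_ne_one.mpr
      ⟨⟨inl a, a, rfl⟩, by simpa [Subtype.ext_iff, map_eq_one_iff _ inl_injective] using ha⟩
  have hcomm : ⁅(inl (φ := φ)).range, R⁆ = ⊥ := by
    refine (eq_bot_or_eq_range_inl_of_normal hmin inferInstance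
      (Subgroup.commutator_le_left _ _)).resolve_right fun h => hAne ?_
    exact Subgroup.eq_bot_of_commutator_eq_self h
  have hRc : R ≤ Subgroup.centralizer (inl (φ := φ)).range := by
    rw [← Subgroup.commutator_eq_bot_iff_le_centralizer, Subgroup.commutator_comm, hcomm]
  -- The image of `R` in `A` is `B`-invariant and nilpotent: trivial, or all of `A`, whose centre
  -- is then a nontrivial `B`-invariant subgroup.
  have hcenter : (leftInvHom R hRc).range ≤ Subgroup.center A := by
    have hinv : ∀ b, ∀ a ∈ (leftInvHom R hRc).range, φ b a ∈ (leftInvHom R hRc).range := by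
      rintro b - ⟨w, rfl⟩
      refine ⟨⟨inr b * (w : A ⋊[φ] B) * (inr b)⁻¹, hRn.conj_mem _ w.2 _⟩, ?_⟩
      simp [leftInvHom]
    rcases hmin _ hinv with h | h
    · simp [h]
    · have : Group.IsNilpotent A := Group.nilpotent_of_surjective _ (MonoidHom.range_eq_top.mp h)
      have hZ : ∀ b, ∀ a ∈ Subgroup.center A, φ b a ∈ Subgroup.center A := fun b a ha =>
        Subgroup.characteristic_iff_le_comap.mp inferInstance (φ b) ha
      rw [(hmin _ hZ).resolve_left (Group.IsNilpotent.center_ne_bot A)]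
      exact le_top
  have hRA : R ≤ (rightHom : A ⋊[φ] B →* B).ker := fun w hw =>
    right_eq_one_of_mem_centralizer hφ (hRc hw)
      (by simpa [leftInvHom] using hcenter ⟨⟨w, hw⟩, rfl⟩)
  exact hQ _ _ (QuotientGroup.lift R rightHom hRA)
    (fun b => ⟨QuotientGroup.mk (inr b), by simp⟩) hRq

section ChiefFactor

variable {G : Type u} [Group G]

theorem exists_isChiefFactor_bot_le [Finite G] {N : Subgroup G} (hN : N.Normal) (hN' : N ≠ ⊥) :
    ∃ M, IsChiefFactor G ⊥ M ∧ M ≤ N := by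
  obtain ⟨M, ⟨hMn, hMN, hM⟩, hmin⟩ :=
    wellFounded_lt.has_min {M : Subgroup G | M.Normal ∧ M ≤ N ∧ M ≠ ⊥} ⟨N, hN, le_rfl, hN'⟩
  refine ⟨M, ⟨inferInstance, hMn, bot_lt_iff_ne_bot.mpr hM, fun M' hM'n _ hM'M => ?_⟩, hMN⟩
  by_contra! h
  exact hmin M' ⟨hM'n, hM'M.trans hMN, h.1⟩ (lt_of_le_of_ne hM'M h.2)

variable {H : Type u} [Group H] {f : G →* H} {N : Subgroup G} {M : Subgroup H}

theorem map_comap_inf_eq_of_le_map (hMN : M ≤ N.map f) : (M.comap f ⊓ N).map f = M := by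
  refine le_antisymm ((Subgroup.map_mono inf_le_left).trans (Subgroup.map_comap_le f M)) ?_
  intro y hy
  obtain ⟨x, hx, rfl⟩ := hMN hy
  exact ⟨x, ⟨hy, hx⟩, rfl⟩

theorem IsChiefFactor.comap_inf (hM : IsChiefFactor H ⊥ M) (hf : Function.Surjective f)
    (hN : N.Normal) (hMN : M ≤ N.map f) : IsChiefFactor G (f.ker ⊓ N) (M.comap f ⊓ N) := by
  obtain ⟨-, hMn, hM, hmin⟩ := hM
  have hmap := map_comap_inf_eq_of_le_map hMN
  refine ⟨inferInstance, inferInstance,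
    lt_of_le_of_ne (inf_le_inf_right N (f.ker_le_comap M)) fun h => hM.ne' ?_,
    fun M' hM' hKM' hM'L => ?_⟩
  · rw [← hmap, ← h]
    exact (Subgroup.map_eq_bot_iff _).mpr inf_le_left
  have hM'N : M' ≤ N := hM'L.trans inf_le_right
  rcases hmin _ (hM'.map f hf) bot_le (hmap ▸ Subgroup.map_mono hM'L) with h | h
  · exact .inl (le_antisymm (le_inf ((Subgroup.map_eq_bot_iff _).mp h) hM'N) hKM')
  · refine .inr (le_antisymm hM'L fun x hx => ?_)
    obtain ⟨m, hm, hmx⟩ := h.ge hx.1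
    have hker : m⁻¹ * x ∈ M' := hKM' ⟨by simp [hmx], N.mul_mem (N.inv_mem (hM'N hm)) hx.2⟩
    simpa using M'.mul_mem hm hker

theorem card_comap_inf_quotient_eq (hMN : M ≤ N.map f) :
    Nat.card ((M.comap f ⊓ N : Subgroup G) ⧸ (f.ker ⊓ N).subgroupOf (M.comap f ⊓ N)) =
      Nat.card M := by
  set ψ : (M.comap f ⊓ N : Subgroup G) →* M :=
    (f.comp (M.comap f ⊓ N).subtype).codRestrict M fun x => x.2.1
  have hψ : Function.Surjective ψ := by
    rintro ⟨y, hy⟩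
    obtain ⟨x, hx, rfl⟩ := (map_comap_inf_eq_of_le_map hMN).ge hy
    exact ⟨⟨x, hx⟩, rfl⟩
  have hker : ψ.ker = (f.ker ⊓ N).subgroupOf (M.comap f ⊓ N) := by
    ext x
    rw [MonoidHom.mem_ker, Subgroup.mem_subgroupOf, Subgroup.mem_inf, MonoidHom.mem_ker]
    exact ⟨fun h => ⟨congrArg Subtype.val h, x.2.2⟩, fun h => Subtype.ext h.1⟩
  rw [← hker]
  exact Nat.card_congr (QuotientGroup.quotientKerEquivOfSurjective ψ hψ).toEquiv

theorem map_le_centralizer_map {L C : Subgroup G}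
    (h : ∀ g ∈ C, ∀ x ∈ L, g * x * g⁻¹ * x⁻¹ ∈ f.ker) :
    L.map f ≤ Subgroup.centralizer (C.map f) := by
  rintro _ ⟨x, hx, rfl⟩
  refine Subgroup.mem_centralizer_iff.mpr ?_
  rintro _ ⟨g, hg, rfl⟩
  rw [← commutatorElement_eq_one_iff_mul_comm, ← map_commutatorElement]
  exact h g hg x hx

end ChiefFactor

section ChiefFactorCentral

variable {G : Type u} [Group G] {K L : Subgroup G}

theorem IsChiefFactor.eq_bot_or_eq_top (hcf : IsChiefFactor G K L) [(K.subgroupOf L).Normal]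
    {U : Subgroup (L ⧸ K.subgroupOf L)}
    (hU : ∀ (g : G) (x : L), (x : L ⧸ K.subgroupOf L) ∈ U →
      ((⟨g * x * g⁻¹, hcf.2.1.conj_mem x x.2 g⟩ : L) : L ⧸ K.subgroupOf L) ∈ U) :
    U = ⊥ ∨ U = ⊤ := by
  obtain ⟨-, hL, hKL, hmin⟩ := id hcf
  set V := U.comap (QuotientGroup.mk' (K.subgroupOf L))
  have hM : (V.map L.subtype).Normal := ⟨by
    rintro _ ⟨x, hx, rfl⟩ g
    exact ⟨⟨g * x * g⁻¹, hL.conj_mem x x.2 g⟩, hU g x hx, rfl⟩⟩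
  have hKM : K ≤ V.map L.subtype := fun x hx =>
    ⟨⟨x, hKL.le hx⟩, by
      change ((⟨x, hKL.le hx⟩ : L) : L ⧸ K.subgroupOf L) ∈ U
      rw [(QuotientGroup.eq_one_iff (N := K.subgroupOf L) _).mpr hx]
      exact U.one_mem, rfl⟩
  rcases hmin _ hM hKM (Subgroup.map_subtype_le V) with h | h
  · refine .inl (eq_bot_iff.mpr fun q hq => ?_)
    obtain ⟨x, rfl⟩ := QuotientGroup.mk_surjective q
    have : (x : G) ∈ K := h ▸ ⟨x, hq, rfl⟩
    simpa [QuotientGroup.eq_one_iff, Subgroup.mem_subgroupOf]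
  · refine .inr (eq_top_iff.mpr fun q _ => ?_)
    obtain ⟨x, rfl⟩ := QuotientGroup.mk_surjective q
    obtain ⟨y, hy, hyx⟩ := h.ge x.2
    rwa [Subtype.ext hyx] at hy

theorem IsChiefFactor.exists_quotient_mem_of_isXCentral {F : GroupClass.{u}} (hQ : F.QClosed)
    {res : ∀ (A : Type u) [Group A], Subgroup A}
    (hres : ∀ (A : Type u) [Group A] [Finite A], IsResidual F A (res A)) [Finite G]
    (hcf : IsChiefFactor G K L)
    (hX : IsXCentral (fun A iA => letI := iA; Group.IsNilpotent ↥(res A)) G K L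
      hcf.1 hcf.2.1 hcf.2.2.1.le) :
    ∃ (C : Subgroup G) (hC : C.Normal), (∀ g : G, g ∈ C ↔ ∀ x ∈ L, g * x * g⁻¹ * x⁻¹ ∈ K) ∧
      (letI := hC; F (G ⧸ C)) := by
  obtain ⟨C, hC, hCiff, φ, hφ, hW⟩ := hX
  refine ⟨C, hC, hCiff, ?_⟩
  have := hcf.1.subgroupOf L
  have : Finite ((L ⧸ K.subgroupOf L) ⋊[φ] (G ⧸ C)) :=
    Finite.of_equiv _ SemidirectProduct.equivProd.symm
  obtain ⟨x, hxL, hxK⟩ := SetLike.exists_of_lt hcf.2.2.1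
  have : Nontrivial (L ⧸ K.subgroupOf L) := nontrivial_of_ne
    (⟨x, hxL⟩ : L) 1 (by simpa [QuotientGroup.eq_one_iff, Subgroup.mem_subgroupOf] using hxK)
  refine (hres _).mem_of_semidirectProduct hQ ((injective_iff_map_eq_one φ).mpr fun b hb => ?_)
    fun U hU => hcf.eq_bot_or_eq_top fun g x hx => hφ g x ▸ hU _ _ hx
  obtain ⟨g, rfl⟩ := QuotientGroup.mk_surjective b
  refine (QuotientGroup.eq_one_iff g).mpr ((hCiff g).mpr fun x hx => ?_)
  have h := DFunLike.congr_fun hb ((⟨x, hx⟩ : L) : L ⧸ K.subgroupOf L)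
  rw [hφ, MulAut.one_apply, QuotientGroup.eq_iff_div_mem, Subgroup.mem_subgroupOf] at h
  rwa [div_eq_mul_inv] at h

end ChiefFactorCentral

theorem IsResidual.le_ker {F : GroupClass.{u}} (hQ : F.QClosed) (hS : F.SClosed)
    {K : Type u} [Group K] {R : Subgroup K} (hR : IsResidual F K R)
    {Q : Type u} [Group Q] (f : K →* Q) (hF : F Q) : R ≤ f.ker :=
  hR.2.2 f.ker f.normal_ker (hQ _ _ (QuotientGroup.quotientKerEquivRange f).symm.toMonoidHom
    (QuotientGroup.quotientKerEquivRange f).symm.surjective (hS Q f.range hF))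

theorem Opi_normal (π : Set ℕ) (X : Type u) [Group X] : (Opi π X).Normal :=
  @Subgroup.iSup_normal _ _ _ _ fun _ =>
    @Subgroup.iSup_normal _ _ _ _ fun hN => @Subgroup.iSup_normal _ _ _ _ fun _ => hN

section PiPrimeNorm

variable {π : Set ℕ} {res : ∀ (A : Type u) [Group A], Subgroup A} {H : Type u} [Group H]
  {L : Subgroup H}

theorem le_piPrimeNorm_of_isPiGroup (hL : L.Normal) (hπ : IsPiGroup {p | p ∉ π} L) :
    L ≤ piPrimeNorm π res H :=
  le_iInf fun _ => (le_sup_of_le_right <| le_iSup_of_le L <| le_iSup_of_le hL <|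
    le_iSup (fun _ => L) hπ).trans Subgroup.le_normalizer

theorem le_piPrimeNorm_of_le_centralizer_ker {F : GroupClass.{u}} (hQ : F.QClosed)
    (hS : F.SClosed) (hres : ∀ (A : Type u) [Group A] [Finite A], IsResidual F A (res A))
    [Finite H] {Q : Type u} [Group Q] (θ : H →* Q) (hF : F Q)
    (hL : L ≤ Subgroup.centralizer θ.ker) : L ≤ piPrimeNorm π res H := by
  refine le_iInf fun K => ?_
  have := Opi_normal {p | p ∉ π} H
  have hK : (res K).map K.subtype ≤ θ.ker := by
    rw [Subgroup.map_le_iff_le_comap, MonoidHom.comap_ker]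
    exact (hres K).le_ker hQ hS _ hF
  exact (hL.trans ((Subgroup.centralizer_le hK).trans (Subgroup.centralizer_le_normalizer _))).trans
    Subgroup.normalizer_le_normalizer_sup_normal

end PiPrimeNorm

theorem piHypercentre_le_norm_infty_general (F : GroupClass.{u})
    (hQ : F.QClosed) (hS : F.SClosed) (π : Set ℕ)
    (res : ∀ (A : Type u) [Group A], Subgroup A)
    (hres : ∀ (A : Type u) [Group A] [Finite A], IsResidual F A (res A))
    (G : Type u) [Group G] [Finite G] (S : Subgroup G)
    (hterm : IsNormTerminal (piPrimeNorm π res) G S) :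
    piHypercentre π (fun A iA => letI := iA; Group.IsNilpotent ↥(res A)) G ≤ S := by
  obtain ⟨-, hSn, hSnorm⟩ := hterm
  refine sSup_le fun N ⟨hNn, hNhyp⟩ => ?_
  by_contra hNS
  set f := QuotientGroup.mk' S
  obtain ⟨M, hM, hMN⟩ := exists_isChiefFactor_bot_le (hNn.map f (QuotientGroup.mk'_surjective S))
    (by rwa [ne_eq, Subgroup.map_eq_bot_iff, QuotientGroup.ker_mk'])
  suffices M ≤ piPrimeNorm π res (G ⧸ S) from hM.2.2.1.ne' (le_bot_iff.mp (hSnorm ▸ this))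
  by_cases hπ : IsPiGroup {p | p ∉ π} M
  · exact le_piPrimeNorm_of_isPiGroup hM.2.1 hπ
  obtain ⟨p, hp, hpM, hpπ⟩ : ∃ p, p.Prime ∧ p ∣ Nat.card M ∧ p ∈ π := by
    simpa [IsPiGroup] using hπ
  have hcf := hM.comap_inf (QuotientGroup.mk'_surjective S) hNn hMN
  obtain ⟨C, hC, hCiff, hFC⟩ := hcf.exists_quotient_mem_of_isXCentral hQ hres
    (hNhyp _ _ hcf inf_le_right ⟨p, hpπ, hp, (card_comap_inf_quotient_eq hMN).symm ▸ hpM⟩)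
  have hSC : S ≤ C := fun s hs => (hCiff s).mpr fun x hx =>
    ⟨by simpa [f, mul_assoc] using S.mul_mem hs (hSn.conj_mem _ (S.inv_mem hs) x),
      N.mul_mem (hNn.conj_mem x hx.2 s) (N.inv_mem hx.2)⟩
  refine le_piPrimeNorm_of_le_centralizer_ker hQ hS hres
    (QuotientGroup.map S C (.id G) hSC) hFC ?_
  have hker : (QuotientGroup.map S C (.id G) hSC).ker ≤ C.map f := fun y hy => by
    obtain ⟨g, rfl⟩ := QuotientGroup.mk_surjective y
    exact ⟨g, (QuotientGroup.eq_one_iff g).mp hy, rfl⟩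
  rw [← map_comap_inf_eq_of_le_map hMN]
  exact (map_le_centralizer_map fun g hg x hx => ((hCiff g).mp hg x hx).1).trans
    (Subgroup.centralizer_le hker)

/-- For a subgroup-closed formation `𝔉`,
`Z_{π(𝔑∘𝔉)}(G) ≤ N^∞_{π'𝔉}(G)`. -/
theorem piHypercentre_le_norm_infty (F : GroupClass.{u})
    (hQ : F.QClosed) (hSD : F.SubdirClosed) (hS : F.SClosed) (π : Set ℕ)
    (res : ∀ (A : Type u) [Group A], Subgroup A)
    (hres : ∀ (A : Type u) [Group A] [Finite A], IsResidual F A (res A))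
    (G : Type u) [Group G] [Finite G] (S : Subgroup G)
    (hterm : IsNormTerminal (piPrimeNorm π res) G S) :
    piHypercentre π (fun A iA => letI := iA; Group.IsNilpotent ↥(res A)) G ≤ S :=
  piHypercentre_le_norm_infty_general F hQ hS π res hres G S hterm
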